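/- Let (X, Y) be a centered bivariate Gaussian vector with covariance matrix Σ (positive definite, with Var X = Var Y = σ² and Cov(X,Y) = ρσ², |ρ| < 1). For u > 0 set Δ_i = u (1^T Σ^{-1})_i, i = 1, 2. If Δ_1, Δ_2 > 0 then P(X > u, Y > u) ≤ (2π)^{-1} (det Σ)^{-1/2} (Δ_1 Δ_2)^{-1} exp(−(u²/2)·1^T Σ^{-1} 1), where 1 = (1,1)^T. -/

import Mathlib

/-!
Since `w ↦ wᵀ Σ⁻¹ w` is a positive semidefinite quadratic form, it lies above its tangent plane at
the corner `(u, u)`. Exponentiating, the density on the quadrant `(u, ∞)²` is bounded by its value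
at the corner times `exp (-Δ₁ (x - u)) exp (-Δ₂ (y - u))`, whose integral over the quadrant is
`(Δ₁ Δ₂)⁻¹`.
-/

open Real MeasureTheory Matrix

theorem exp_neg_mul_sub (Δ u x : ℝ) : exp (-(Δ * (x - u))) = exp (Δ * u) * exp (-Δ * x) := by
  rw [← exp_add]; ring_nf

theorem integrableOn_exp_neg_mul_sub_Ioi {Δ : ℝ} (hΔ : 0 < Δ) (u : ℝ) :
    IntegrableOn (fun x => exp (-(Δ * (x - u)))) (Set.Ioi u) := by
  simp_rw [exp_neg_mul_sub]
  exact (integrableOn_exp_mul_Ioi (neg_neg_of_pos hΔ) u).const_mul _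

theorem integral_exp_neg_mul_sub_Ioi {Δ : ℝ} (hΔ : 0 < Δ) (u : ℝ) :
    ∫ x in Set.Ioi u, exp (-(Δ * (x - u))) = Δ⁻¹ := by
  simp_rw [exp_neg_mul_sub, integral_const_mul, integral_exp_mul_Ioi (neg_neg_of_pos hΔ), neg_mul,
    exp_neg]
  field_simp [hΔ.ne', (exp_pos (Δ * u)).ne']

theorem integral_integral_le_integral_mul_integral {α β : Type*} [MeasurableSpace α]
    [MeasurableSpace β] {μ : Measure α} {ν : Measure β} {f : α → β → ℝ}
    {p : α → ℝ} {q : β → ℝ}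
    (hp : Integrable p μ) (hq : Integrable q ν) (hf : ∀ᵐ x ∂μ, ∀ᵐ y ∂ν, 0 ≤ f x y)
    (hle : ∀ᵐ x ∂μ, ∀ᵐ y ∂ν, f x y ≤ p x * q y) :
    ∫ x, ∫ y, f x y ∂ν ∂μ ≤ (∫ x, p x ∂μ) * ∫ y, q y ∂ν :=
  calc ∫ x, ∫ y, f x y ∂ν ∂μ ≤ ∫ x, p x * ∫ y, q y ∂ν ∂μ := by
        refine integral_mono_of_nonneg (hf.mono fun x hx => integral_nonneg_of_ae hx)
          (hp.mul_const _) ?_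
        filter_upwards [hf, hle] with x hfx hlex
        rw [← integral_const_mul]
        exact integral_mono_of_nonneg hfx (hq.const_mul _) hlex
    _ = (∫ x, p x ∂μ) * ∫ y, q y ∂ν := integral_mul_const _ _

theorem Matrix.PosSemidef.dotProduct_mulVec_ge_tangent {n : Type*} [Fintype n]
    {A : Matrix n n ℝ} (hA : A.PosSemidef) (a w : n → ℝ) :
    a ⬝ᵥ A *ᵥ a + 2 * ((a ᵥ* A) ⬝ᵥ (w - a)) ≤ w ⬝ᵥ A *ᵥ w := by
  obtain ⟨v, rfl⟩ : ∃ v, w = a + v := ⟨w - a, by abel⟩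
  have hAt : Aᵀ = A := by simpa [conjTranspose_eq_transpose_of_trivial] using hA.isHermitian.eq
  have hsymm : v ⬝ᵥ A *ᵥ a = (a ᵥ* A) ⬝ᵥ v := by
    rw [dotProduct_comm, ← mulVec_transpose, hAt]
  have hv : 0 ≤ v ⬝ᵥ A *ᵥ v := by simpa using hA.dotProduct_mulVec_nonneg v
  simp only [add_sub_cancel_left, mulVec_add, dotProduct_add, add_dotProduct, hsymm,
    ← dotProduct_mulVec]
  linarith

theorem Matrix.PosSemidef.exp_neg_dotProduct_mulVec_le {n : Type*} [Fintype n]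
    {A : Matrix n n ℝ} (hA : A.PosSemidef) (a w : n → ℝ) :
    exp (-(w ⬝ᵥ A *ᵥ w) / 2) ≤
      exp (-(a ⬝ᵥ A *ᵥ a) / 2) * exp (-((a ᵥ* A) ⬝ᵥ (w - a))) := by
  rw [← exp_add, exp_le_exp]
  linarith [hA.dotProduct_mulVec_ge_tangent a w]

theorem savage_bivariate_tail_general (S : Matrix (Fin 2) (Fin 2) ℝ) (hpd : S.PosDef)
    (u : ℝ) (Δ1 Δ2 : ℝ)
    (hΔ1 : Δ1 = u * ((1 : Fin 2 → ℝ) ᵥ* S⁻¹) 0)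
    (hΔ2 : Δ2 = u * ((1 : Fin 2 → ℝ) ᵥ* S⁻¹) 1)
    (hΔ1pos : 0 < Δ1) (hΔ2pos : 0 < Δ2) :
    (∫ x in Set.Ioi u, ∫ y in Set.Ioi u,
        (2 * Real.pi)⁻¹ * (Real.sqrt S.det)⁻¹ *
          Real.exp (-(![x, y] ⬝ᵥ (S⁻¹ *ᵥ ![x, y])) / 2))
      ≤ (2 * Real.pi)⁻¹ * (Real.sqrt S.det)⁻¹ * (Δ1 * Δ2)⁻¹ *
          Real.exp (-(u ^ 2 / 2) * ((1 : Fin 2 → ℝ) ⬝ᵥ (S⁻¹ *ᵥ (1 : Fin 2 → ℝ)))) := by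
  have hbound (x y : ℝ) : exp (-(![x, y] ⬝ᵥ (S⁻¹ *ᵥ ![x, y])) / 2)
      ≤ exp (-(u ^ 2 / 2) * ((1 : Fin 2 → ℝ) ⬝ᵥ (S⁻¹ *ᵥ 1)))
        * exp (-(Δ1 * (x - u))) * exp (-(Δ2 * (y - u))) := by
    convert hpd.inv.posSemidef.exp_neg_dotProduct_mulVec_le (u • 1) ![x, y] using 1
    rw [mul_assoc, ← exp_add]
    congr 2
    · rw [mulVec_smul, dotProduct_smul, smul_dotProduct, smul_eq_mul, smul_eq_mul]
      ring
    · simp only [hΔ1, hΔ2, smul_vecMul, dotProduct, Fin.sum_univ_two, Pi.smul_apply, smul_eq_mul,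
        Pi.sub_apply, Pi.one_apply, cons_val_zero, cons_val_one]
      ring
  set c := (2 * π)⁻¹ * (√S.det)⁻¹
  set E := exp (-(u ^ 2 / 2) * ((1 : Fin 2 → ℝ) ⬝ᵥ (S⁻¹ *ᵥ 1)))
  calc _ ≤ (∫ x in Set.Ioi u, c * E * exp (-(Δ1 * (x - u))))
        * ∫ y in Set.Ioi u, exp (-(Δ2 * (y - u))) := by
        refine integral_integral_le_integral_mul_integral
          ((integrableOn_exp_neg_mul_sub_Ioi hΔ1pos u).const_mul _)
          (integrableOn_exp_neg_mul_sub_Ioi hΔ2pos u)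
          (.of_forall fun x => .of_forall fun y => by positivity)
          (.of_forall fun x => .of_forall fun y => ?_)
        rw [mul_assoc c, mul_assoc c]
        exact mul_le_mul_of_nonneg_left (hbound x y) (by positivity)
    _ = c * (Δ1 * Δ2)⁻¹ * E := by
        rw [integral_const_mul, integral_exp_neg_mul_sub_Ioi hΔ1pos,
          integral_exp_neg_mul_sub_Ioi hΔ2pos, mul_inv]
        ring

/-- Savage's upper bound on the joint upper tail of a nondegenerate centered bivariate
Gaussian vector with covariance matrix `S`, equal variances `σ2` and correlation `ρ`. -/
theorem savage_bivariate_tail (S : Matrix (Fin 2) (Fin 2) ℝ) (hpd : S.PosDef)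
    (σ2 ρ : ℝ) (h00 : S 0 0 = σ2) (h11 : S 1 1 = σ2)
    (h01 : S 0 1 = ρ * σ2) (h10 : S 1 0 = ρ * σ2) (hρ : |ρ| < 1)
    (u : ℝ) (hu : 0 < u) (Δ1 Δ2 : ℝ)
    (hΔ1 : Δ1 = u * ((1 : Fin 2 → ℝ) ᵥ* S⁻¹) 0)
    (hΔ2 : Δ2 = u * ((1 : Fin 2 → ℝ) ᵥ* S⁻¹) 1)
    (hΔ1pos : 0 < Δ1) (hΔ2pos : 0 < Δ2) :
    (∫ x in Set.Ioi u, ∫ y in Set.Ioi u,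
        (2 * Real.pi)⁻¹ * (Real.sqrt S.det)⁻¹ *
          Real.exp (-(![x, y] ⬝ᵥ (S⁻¹ *ᵥ ![x, y])) / 2))
      ≤ (2 * Real.pi)⁻¹ * (Real.sqrt S.det)⁻¹ * (Δ1 * Δ2)⁻¹ *
          Real.exp (-(u ^ 2 / 2) * ((1 : Fin 2 → ℝ) ⬝ᵥ (S⁻¹ *ᵥ (1 : Fin 2 → ℝ)))) :=
  savage_bivariate_tail_general S hpd u Δ1 Δ2 hΔ1 hΔ2 hΔ1pos hΔ2pos
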